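/- arXiv:1310.1746 — 5 statements merged into one kernel-verified Lean document; each statement's English description precedes it below -/
import Mathlib

section
/- Add User step of ONLINE-SMART does not decrease platform utility: if χ t ≥ 0 for every task t, T and R are finite sets of users with T ⊆ R, i is a user with i ∉ R who is paid p i = v(R ∪ {i}) − v(R) (its marginal value with respect to the reference set R), then the marginal platform utility of adding i to the winner set T is nonnegative: v(T ∪ {i}) − v(T) − p i ≥ 0. -/
lemma marg_eq {ι Γ : Type*} [DecidableEq ι] [DecidableEq Γ]
    (χ : Γ → ℝ) (τ : ι → Finset Γ) (S : Finset ι) (i : ι) :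
    (∑ t ∈ (insert i S).biUnion τ, χ t) - ∑ t ∈ S.biUnion τ, χ t
      = ∑ t ∈ τ i \ S.biUnion τ, χ t := by
  rw [Finset.biUnion_insert, Finset.union_comm,
    ← Finset.sum_sdiff (Finset.subset_union_left (s₁ := S.biUnion τ) (s₂ := τ i)),
    Finset.union_sdiff_left]
  ring

/-- The Add User step of ONLINE-SMART does not decrease platform
utility. -/
theorem add_user_nonneg_marginal_utility
    {ι Γ : Type*} [DecidableEq ι] [DecidableEq Γ] [Fintype Γ]
    (χ : Γ → ℝ) (τ : ι → Finset Γ) (p : ι → ℝ) (hχ : ∀ t, χ t ≥ 0)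
    (T R : Finset ι) (hTR : T ⊆ R) (i : ι) (hi : i ∉ R)
    (hp : p i = (∑ t ∈ (insert i R).biUnion τ, χ t) - ∑ t ∈ R.biUnion τ, χ t) :
    (∑ t ∈ (insert i T).biUnion τ, χ t) - (∑ t ∈ T.biUnion τ, χ t) - p i ≥ 0 := by
  rw [hp, marg_eq, marg_eq, ge_iff_le, sub_nonneg]
  apply Finset.sum_le_sum_of_subset_of_nonneg
  · exact Finset.sdiff_subset_sdiff le_rfl (Finset.biUnion_subset_biUnion_of_subset_left τ hTR)
  · intro t _ _; exact hχ t
end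

section
/- Try To Replace step of ONLINE-SMART does not decrease platform utility: if χ t ≥ 0 for every task t, R is a finite set of users, j ∈ R, T is a finite set of users with T ⊆ R \ {j}, the bid b j of user j satisfies v(R) − v(R \ {j}) ≥ b j, and an incoming user i is paid p i = v((R \ {j}) ∪ {i}) − v(R) + b j, then v(T ∪ {i}) − v(T) ≥ p i, i.e. the marginal platform utility of adding i to the winner set T is nonnegative. -/
lemma marginal_eq {ι Γ : Type*} [DecidableEq ι] [DecidableEq Γ]
    (χ : Γ → ℝ) (τ : ι → Finset Γ) (i : ι) (S : Finset ι) :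
    (∑ t ∈ (insert i S).biUnion τ, χ t)
      = (∑ t ∈ S.biUnion τ, χ t) + ∑ t ∈ τ i \ S.biUnion τ, χ t := by
  rw [Finset.biUnion_insert]
  have h : τ i ∪ S.biUnion τ = S.biUnion τ ∪ (τ i \ S.biUnion τ) := by
    rw [Finset.union_sdiff_self_eq_union, Finset.union_comm]
  rw [h, Finset.sum_union (Finset.disjoint_sdiff)]


/-- The Try To Replace step of ONLINE-SMART does not decrease
platform utility. -/
theorem try_to_replace_nonneg_marginal_utility
    {ι Γ : Type*} [DecidableEq ι] [DecidableEq Γ] [Fintype Γ]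
    (χ : Γ → ℝ) (τ : ι → Finset Γ) (b : ι → ℝ) (p : ι → ℝ) (hχ : ∀ t, χ t ≥ 0)
    (R : Finset ι) (j : ι) (hj : j ∈ R)
    (T : Finset ι) (hT : T ⊆ R \ {j})
    (hbj : (∑ t ∈ R.biUnion τ, χ t) - (∑ t ∈ (R \ {j}).biUnion τ, χ t) ≥ b j)
    (i : ι)
    (hp : p i = (∑ t ∈ (insert i (R \ {j})).biUnion τ, χ t)
        - (∑ t ∈ R.biUnion τ, χ t) + b j) :
    (∑ t ∈ (insert i T).biUnion τ, χ t) - (∑ t ∈ T.biUnion τ, χ t) ≥ p i := by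
  rw [hp, marginal_eq χ τ i T, marginal_eq χ τ i (R \ {j})]
  have hsub : (R \ {j}).biUnion τ ⊇ T.biUnion τ :=
    Finset.biUnion_subset_biUnion_of_subset_left τ hT
  have hmono : (∑ t ∈ τ i \ (R \ {j}).biUnion τ, χ t)
      ≤ ∑ t ∈ τ i \ T.biUnion τ, χ t := by
    apply Finset.sum_le_sum_of_subset_of_nonneg
    · exact Finset.sdiff_subset_sdiff (le_refl _) hsub
    · exact fun t _ _ => hχ t
  linarith
end

section
/- Sufficiency direction of Myerson's theorem (deterministic, single bidder): let θ : ℝ and suppose the allocation rule A satisfies A b for every bid b < θ and b ≤ θ for every bid b with A b, and the payment rule is constant equal to θ on selected bids (p b = θ). Then the mechanism is truthful: for every true cost c and every bid b, ω(c, c) ≥ ω(b, c). -/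
/-- Utility of a single bidder with true cost `c` bidding `b` under allocation
rule `A` and payment rule `p`. -/
noncomputable def bidderUtility (A : ℝ → Prop) (p : ℝ → ℝ) (b c : ℝ) : ℝ :=
  haveI := Classical.propDecidable (A b)
  if A b then p b - c else 0

/-- A mechanism is truthful if bidding the true cost is always optimal. -/
def Truthful (A : ℝ → Prop) (p : ℝ → ℝ) : Prop :=
  ∀ c b : ℝ, bidderUtility A p c c ≥ bidderUtility A p b c

/-- Sufficiency direction of Myerson's theorem (deterministic,
single bidder): a threshold allocation rule with constant payment equal to the
threshold on winning bids is truthful. -/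
theorem myerson_sufficiency
    (A : ℝ → Prop) (p : ℝ → ℝ) (θ : ℝ)
    (hwin : ∀ b : ℝ, b < θ → A b)
    (hle : ∀ b : ℝ, A b → b ≤ θ)
    (hpay : ∀ b : ℝ, A b → p b = θ) :
    Truthful A p := by
  intro c b
  unfold bidderUtility
  by_cases hb : A b <;> by_cases hc : A c <;> simp [hb, hc]
  · rw [hpay b hb, hpay c hc]
  · have := hle b hb
    have : θ ≤ c := le_of_not_gt fun h => hc (hwin c h)
    rw [hpay b hb]; linarith
  · have := hle c hc
    rw [hpay c hc]; linarith
end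

section
/- Deterministic single-bidder version of Myerson's theorem: suppose there exists a winning bid (some b with A b) and a losing bid (some b with ¬A b). Then the mechanism is truthful if and only if there exists a critical value p* ∈ ℝ such that (i) every winning bid b satisfies p b = p* and b ≤ p*, (ii) every bid b with b < p* wins (A b holds), and (iii) every bid b with p* < b loses (¬A b). -/
lemma bidderUtility_pos (A : ℝ → Prop) (p : ℝ → ℝ) {b : ℝ} (c : ℝ) (h : A b) :
    bidderUtility A p b c = p b - c := by
  simp [bidderUtility, h]

lemma bidderUtility_neg (A : ℝ → Prop) (p : ℝ → ℝ) {b : ℝ} (c : ℝ) (h : ¬ A b) :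
    bidderUtility A p b c = 0 := by
  simp [bidderUtility, h]

/-- Deterministic single-bidder version of Myerson's theorem:
given a winning and a losing bid, the mechanism is truthful if and only if
there is a critical value `p*` such that every winning bid is paid `p*` and is
at most `p*`, every bid strictly below `p*` wins, and every bid strictly above
`p*` loses. -/
theorem myerson_single_bidder
    (A : ℝ → Prop) (p : ℝ → ℝ)
    (hwin : ∃ b : ℝ, A b) (hlose : ∃ b : ℝ, ¬ A b) :
    Truthful A p ↔
      ∃ pstar : ℝ,
        (∀ b : ℝ, A b → p b = pstar ∧ b ≤ pstar) ∧
        (∀ b : ℝ, b < pstar → A b) ∧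
        (∀ b : ℝ, pstar < b → ¬ A b) := by
  constructor
  · intro ht
    obtain ⟨w, hw⟩ := hwin
    obtain ⟨l, hl⟩ := hlose
    refine ⟨p w, ?_, ?_, ?_⟩
    · intro b hb
      constructor
      · -- payments equal
        have h1 := ht b w
        have h2 := ht w b
        rw [bidderUtility_pos A p b hb, bidderUtility_pos A p b hw] at h1
        rw [bidderUtility_pos A p w hw, bidderUtility_pos A p w hb] at h2
        linarith
      · -- b ≤ p w = p b
        have h1 := ht b l
        rw [bidderUtility_pos A p b hb, bidderUtility_neg A p b hl] at h1
        have h2 := ht w b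
        rw [bidderUtility_pos A p w hw, bidderUtility_pos A p w hb] at h2
        linarith
    · intro b hb
      by_contra hnb
      have h1 := ht b w
      rw [bidderUtility_neg A p b hnb, bidderUtility_pos A p b hw] at h1
      linarith
    · intro b hb hab
      have h1 := ht b w
      have h2 := ht b l
      have h3 := ht w b
      rw [bidderUtility_pos A p b hab, bidderUtility_pos A p b hw] at h1
      rw [bidderUtility_pos A p b hab, bidderUtility_neg A p b hl] at h2
      rw [bidderUtility_pos A p w hw, bidderUtility_pos A p w hab] at h3
      linarith
  · rintro ⟨ps, hA, hlt, hgt⟩ c b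
    by_cases hc : A c
    · obtain ⟨hpc, hcle⟩ := hA c hc
      rw [bidderUtility_pos A p c hc, hpc]
      by_cases hb : A b
      · obtain ⟨hpb, _⟩ := hA b hb
        rw [bidderUtility_pos A p c hb, hpb]
      · rw [bidderUtility_neg A p c hb]; linarith
    · rw [bidderUtility_neg A p c hc]
      have hge : ps ≤ c := by
        by_contra h
        exact hc (hlt c (lt_of_not_ge h))
      by_cases hb : A b
      · obtain ⟨hpb, _⟩ := hA b hb
        rw [bidderUtility_pos A p c hb, hpb]; linarith
      · rw [bidderUtility_neg A p c hb]
end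

section
/- In a truthful deterministic single-bidder reverse-auction mechanism with a winning and a losing bid, every bid strictly below the winners' payment wins: if the mechanism is truthful, some bid wins and some bid loses, then for every winning bid b_w (A b_w) and every bid b with b < p b_w, A b holds. -/
/-- In a truthful deterministic single-bidder reverse-auction
mechanism with a winning and a losing bid, every bid strictly below the
winners' payment wins. -/
theorem truthful_below_payment_wins
    (A : ℝ → Prop) (p : ℝ → ℝ) (h : Truthful A p)
    (hwin : ∃ b : ℝ, A b) (hlose : ∃ b : ℝ, ¬ A b)
    (b_w : ℝ) (hbw : A b_w) (b : ℝ) (hb : b < p b_w) :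
    A b := by
  by_contra hA
  have := h b b_w
  simp [bidderUtility, hA, hbw] at this
  linarith
end
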